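/- arXiv:1009.0174 — 2 statements merged into one kernel-verified Lean document; each statement's English description precedes it below -/
import Mathlib

section
/- The map b_π : ℝ^{4n+1} → ℝ^{4n+1} given in coordinates by b_π(t, q^i, p_i, q̇^i, ṗ_i) = (t, q^i, p_i, −ṗ_i, q̇^i) is an anti-Poisson isomorphism: for all smooth functions f, g, {f ∘ b_π, g ∘ b_π}₁ = −({f,g}₂ ∘ b_π), where {·,·}₁ is the bracket Σ_i (∂f/∂q^i ∂g/∂ṗ_i − ∂f/∂ṗ_i ∂g/∂q^i + ∂f/∂q̇^i ∂g/∂p_i − ∂f/∂p_i ∂g/∂q̇^i) in coordinates (t,q^i,p_i,q̇^i,ṗ_i), and {·,·}₂, in coordinates (t, q^i, p_i, P_i, Π_i), is Σ_i (∂f/∂q^i ∂g/∂P_i − ∂f/∂P_i ∂g/∂q^i + ∂f/∂p_i ∂g/∂Π_i − ∂f/∂Π_i ∂g/∂p_i). -/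
open scoped BigOperators

namespace Stmt8

/-- `ℝ^{4n+1}`. Source coordinates `(t, q^i, p_i, q̇^i, ṗ_i)`;
target coordinates `(t, q^i, p_i, P_i, Π_i)`. -/
abbrev E (n : ℕ) := ℝ × (Fin n → ℝ) × (Fin n → ℝ) × (Fin n → ℝ) × (Fin n → ℝ)

def e1 (n : ℕ) (i : Fin n) : E n := (0, Pi.single i 1, 0, 0, 0)
def e2 (n : ℕ) (i : Fin n) : E n := (0, 0, Pi.single i 1, 0, 0)
def e3 (n : ℕ) (i : Fin n) : E n := (0, 0, 0, Pi.single i 1, 0)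
def e4 (n : ℕ) (i : Fin n) : E n := (0, 0, 0, 0, Pi.single i 1)

/-- Source bracket, coordinates `(t, q, p, q̇, ṗ)`:
`{f,g}₁ = Σ_i (∂f/∂q^i ∂g/∂ṗ_i − ∂f/∂ṗ_i ∂g/∂q^i + ∂f/∂q̇^i ∂g/∂p_i − ∂f/∂p_i ∂g/∂q̇^i)`. -/
noncomputable def bracket1 (n : ℕ) (f g : E n → ℝ) : E n → ℝ :=
  fun x => ∑ i : Fin n,
    (fderiv ℝ f x (e1 n i) * fderiv ℝ g x (e4 n i)
      - fderiv ℝ f x (e4 n i) * fderiv ℝ g x (e1 n i)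
      + fderiv ℝ f x (e3 n i) * fderiv ℝ g x (e2 n i)
      - fderiv ℝ f x (e2 n i) * fderiv ℝ g x (e3 n i))

/-- Target bracket, coordinates `(t, q, p, P, Π)`:
`{f,g}₂ = Σ_i (∂f/∂q^i ∂g/∂P_i − ∂f/∂P_i ∂g/∂q^i + ∂f/∂p_i ∂g/∂Π_i − ∂f/∂Π_i ∂g/∂p_i)`. -/
noncomputable def bracket2 (n : ℕ) (f g : E n → ℝ) : E n → ℝ :=
  fun x => ∑ i : Fin n,
    (fderiv ℝ f x (e1 n i) * fderiv ℝ g x (e3 n i)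
      - fderiv ℝ f x (e3 n i) * fderiv ℝ g x (e1 n i)
      + fderiv ℝ f x (e2 n i) * fderiv ℝ g x (e4 n i)
      - fderiv ℝ f x (e4 n i) * fderiv ℝ g x (e2 n i))

/-- The map `b_π(t, q, p, q̇, ṗ) = (t, q, p, −ṗ, q̇)`. -/
def bmap (n : ℕ) : E n → E n :=
  fun x => (x.1, x.2.1, x.2.2.1, -x.2.2.2.2, x.2.2.2.1)

/-- `bmap` as a linear map. -/
def bLin (n : ℕ) : E n →ₗ[ℝ] E n where
  toFun := bmap n
  map_add' x y := by
    simp [bmap, Prod.ext_iff]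
    abel
  map_smul' c x := by
    simp [bmap, Prod.ext_iff, smul_neg]

/-- `bmap` as a continuous linear map. -/
noncomputable def bCLM (n : ℕ) : E n →L[ℝ] E n :=
  LinearMap.toContinuousLinearMap (bLin n)

lemma bCLM_apply (n : ℕ) (x : E n) : bCLM n x = bmap n x := rfl

lemma fderiv_comp_bmap (n : ℕ) (f : E n → ℝ) (hf : ContDiff ℝ (⊤ : ℕ∞) f) (x v : E n) :
    fderiv ℝ (f ∘ bmap n) x v = fderiv ℝ f (bmap n x) (bmap n v) := by
  have h1 : f ∘ bmap n = f ∘ (bCLM n) := rfl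
  rw [h1, fderiv_comp (x := x) (hf.differentiable (by simp) (bCLM n x))
      (bCLM n).differentiableAt]
  rw [(bCLM n).fderiv]
  rfl

/-- `b_π` is an anti-Poisson isomorphism: it is bijective and
`{f ∘ b_π, g ∘ b_π}₁ = −({f,g}₂ ∘ b_π)` for all smooth `f`, `g`. -/
theorem b_anti_poisson_isomorphism (n : ℕ) :
    Function.Bijective (bmap n) ∧
    ∀ f g : E n → ℝ, ContDiff ℝ (⊤ : ℕ∞) f → ContDiff ℝ (⊤ : ℕ∞) g →
      ∀ x : E n,
        bracket1 n (f ∘ bmap n) (g ∘ bmap n) x = -(bracket2 n f g (bmap n x)) := by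
  constructor
  · have : Function.LeftInverse (fun x : E n => (x.1, x.2.1, x.2.2.1, x.2.2.2.2, -x.2.2.2.1))
        (bmap n) := by
      intro x; simp [bmap]
    exact Function.bijective_iff_has_inverse.2
      ⟨_, this, fun x => by simp [bmap]⟩
  · intro f g hf hg x
    have hb1 : ∀ i, bmap n (e1 n i) = e1 n i := fun i => by simp [bmap, e1]
    have hb2 : ∀ i, bmap n (e2 n i) = e2 n i := fun i => by simp [bmap, e2]
    have hb3 : ∀ i, bmap n (e3 n i) = e4 n i := fun i => by simp [bmap, e3, e4]
    have hb4 : ∀ i, bmap n (e4 n i) = -e3 n i := fun i => by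
      simp [bmap, e4, e3, Prod.ext_iff]
    simp only [bracket1, bracket2]
    rw [← Finset.sum_neg_distrib]
    refine Finset.sum_congr rfl fun i _ => ?_
    rw [fderiv_comp_bmap n f hf, fderiv_comp_bmap n f hf, fderiv_comp_bmap n f hf,
        fderiv_comp_bmap n f hf, fderiv_comp_bmap n g hg, fderiv_comp_bmap n g hg,
        fderiv_comp_bmap n g hg, fderiv_comp_bmap n g hg, hb1, hb2, hb3, hb4,
        map_neg, map_neg]
    ring

end Stmt8
end

section
/- The map b̃_π : ℝ^{4n+3} → ℝ^{4n+3} given by b̃_π(t, q^i, p, p_i, q̇^i, ṗ, ṗ_i) = (t, q^i, p, p_i, −ṗ, −ṗ_i, q̇^i) is a diffeomorphism satisfying b̃_π*Φ = −Ω, where Ω = dt ∧ dṗ + Σ_i (dq^i ∧ dṗ_i + dq̇^i ∧ dp_i) in the source coordinates and Φ = dt ∧ dP_t + Σ_i (dq^i ∧ dP_{q^i} + dp_i ∧ dP_{p_i}) in target coordinates (t, q^i, p, p_i, P_t, P_{q^i}, P_{p_i}). -/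
open scoped BigOperators

namespace Stmt18

/-- `ℝ^{4n+3}`, source coordinates `(t, q^i, p, p_i, q̇^i, ṗ, ṗ_i)`. -/
abbrev F (n : ℕ) :=
  ℝ × (Fin n → ℝ) × ℝ × (Fin n → ℝ) × (Fin n → ℝ) × ℝ × (Fin n → ℝ)

/-- `ℝ^{4n+3}`, target coordinates `(t, q^i, p, p_i, P_t, P_{q^i}, P_{p_i})`. -/
abbrev G (n : ℕ) :=
  ℝ × (Fin n → ℝ) × ℝ × (Fin n → ℝ) × ℝ × (Fin n → ℝ) × (Fin n → ℝ)

/-- `Ω = dt ∧ dṗ + Σ_i (dq^i ∧ dṗ_i + dq̇^i ∧ dp_i)` in source coordinates. -/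
noncomputable def Omega (n : ℕ) (u v : F n) : ℝ :=
  (u.1 * v.2.2.2.2.2.1 - v.1 * u.2.2.2.2.2.1)
    + ∑ i : Fin n,
        ((u.2.1 i * v.2.2.2.2.2.2 i - v.2.1 i * u.2.2.2.2.2.2 i)
          + (u.2.2.2.2.1 i * v.2.2.2.1 i - v.2.2.2.2.1 i * u.2.2.2.1 i))

/-- `Φ = dt ∧ dP_t + Σ_i (dq^i ∧ dP_{q^i} + dp_i ∧ dP_{p_i})` in target coordinates. -/
noncomputable def Phi (n : ℕ) (u v : G n) : ℝ :=
  (u.1 * v.2.2.2.2.1 - v.1 * u.2.2.2.2.1)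
    + ∑ i : Fin n,
        ((u.2.1 i * v.2.2.2.2.2.1 i - v.2.1 i * u.2.2.2.2.2.1 i)
          + (u.2.2.2.1 i * v.2.2.2.2.2.2 i - v.2.2.2.1 i * u.2.2.2.2.2.2 i))

/-- `b̃_π(t, q, p, p_i, q̇, ṗ, ṗ_i) = (t, q, p, p_i, −ṗ, −ṗ_i, q̇)`. -/
def btilde (n : ℕ) (x : F n) : G n :=
  (x.1, x.2.1, x.2.2.1, x.2.2.2.1, -x.2.2.2.2.2.1, -x.2.2.2.2.2.2, x.2.2.2.2.1)

/-- A linear isomorphism, so in particular a diffeomorphism of `ℝ^{4n+3}`. -/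
def btildeLinearEquiv (n : ℕ) : F n ≃ₗ[ℝ] G n where
  toFun := btilde n
  map_add' x y := by simp only [btilde, Prod.fst_add, Prod.snd_add, neg_add, Prod.mk_add_mk]
  map_smul' c x := by simp [btilde]
  invFun y := (y.1, y.2.1, y.2.2.1, y.2.2.2.1, y.2.2.2.2.2.2, -y.2.2.2.2.1, -y.2.2.2.2.2.1)
  left_inv x := by simp [btilde]
  right_inv y := by simp [btilde]

theorem btilde_bijective (n : ℕ) : Function.Bijective (btilde n) :=
  (btildeLinearEquiv n).bijective

theorem Phi_btilde (n : ℕ) (u v : F n) : Phi n (btilde n u) (btilde n v) = -Omega n u v := by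
  -- `dt ∧ dP_t` and `dq ∧ dP_q` pick up the signs of `P_t = −ṗ`, `P_q = −ṗ_i`, while
  -- `dp_i ∧ dP_p = dp_i ∧ dq̇` is `−dq̇ ∧ dp_i` by antisymmetry.
  simp only [Phi, Omega, btilde, Pi.neg_apply, neg_add, ← Finset.sum_neg_distrib]
  congr 1
  · ring
  · exact Finset.sum_congr rfl fun i _ => by ring

/-- `b̃_π` is a diffeomorphism (a linear bijection) satisfying `b̃_π*Φ = −Ω`. -/
theorem btilde_anti_presymplectic (n : ℕ) :
    Function.Bijective (btilde n) ∧
    (∀ u v : F n, Phi n (btilde n u) (btilde n v) = -Omega n u v) :=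
  ⟨btilde_bijective n, Phi_btilde n⟩

end Stmt18
end
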